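/- Let n be a positive integer, U_n(q) the n×n matrix with (i,j) entry (-1)^{i+j} q^{(j-i)(j-i+1)/2} [j-1 choose j-i]_q, and for 1 ≤ i ≤ n let U_n(q)^{[1,n]\setminus\{i\}}_{[2,n]} be the (n-1)×(n-1) submatrix obtained by deleting row i and the first column. Then det U_n(q)^{[1,n]\setminus\{i\}}_{[2,n]} = (-q)^{i-1}. -/

import Mathlib

open Finset

/-- Gaussian binomial coefficient, via the q-Pascal recurrence. -/
noncomputable def qbinom (q : ℂ) : ℕ → ℕ → ℂ
  | _, 0 => 1
  | 0, _+1 => 0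
  | m+1, r+1 => qbinom q m r + q ^ (r+1) * qbinom q m (r+1)

/-- Gaussian binomial coefficient with integer arguments, zero when `r < 0` or `r > m`. -/
noncomputable def qbinomZ (q : ℂ) (m r : ℤ) : ℂ :=
  if 0 ≤ r ∧ r ≤ m then qbinom q m.toNat r.toNat else 0

lemma qbinom_zero_right (q : ℂ) (m : ℕ) : qbinom q m 0 = 1 := by
  cases m <;> rfl

lemma qbinom_eq_zero (q : ℂ) {m r : ℕ} (h : m < r) : qbinom q m r = 0 := by
  induction m generalizing r with
  | zero => cases r with
    | zero => omega
    | succ r => rfl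
  | succ m ih =>
    cases r with
    | zero => omega
    | succ r =>
      show qbinom q m r + q ^ (r+1) * qbinom q m (r+1) = 0
      rw [ih (by omega), ih (by omega)]
      ring

lemma tri_succ (k : ℕ) : k*(k+1)/2 + (k+1) = (k+1)*(k+2)/2 := by
  have h : (k+1)*(k+2) = k*(k+1) + (k+1)*2 := by ring
  rw [h, Nat.add_mul_div_right _ _ (by norm_num : (0:ℕ) < 2)]

lemma tri_pred (k : ℕ) : (k+1)*((k+1)-1)/2 = k*(k+1)/2 := by
  rw [Nat.add_sub_cancel, Nat.mul_comm]

lemma intdiv2 (k : ℕ) : ((k:ℤ) * ((k:ℤ)+1)) / 2 = ((k*(k+1)/2 : ℕ) : ℤ) := by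
  have h := Int.natCast_ediv (k*(k+1)) 2
  push_cast at h
  exact h.symm

lemma tri2 (k : ℕ) : k*(k+1)/2 = k*(k-1)/2 + k := by
  cases k with
  | zero => rfl
  | succ k =>
    rw [show (k+1)-1 = k from rfl, ← tri_succ k]
    ring_nf

lemma gauss_sum (q : ℂ) (c : ℕ) :
    ∑ k ∈ range (c+1), (-1:ℂ)^k * q^(k*(k-1)/2) * qbinom q c k
      = if c = 0 then 1 else 0 := by
  cases c with
  | zero => simp [qbinom]
  | succ c =>
    rw [Finset.sum_range_succ', if_neg (Nat.succ_ne_zero c)]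
    set g : ℕ → ℂ := fun j => (-1:ℂ)^j * q^(j*(j+1)/2) * qbinom q c j with hg
    have hterm : ∀ k ∈ range (c+1),
        (-1:ℂ)^(k+1) * q^((k+1)*((k+1)-1)/2) * qbinom q (c+1) (k+1)
          = g (k+1) - g k := by
      intro k _
      have hrec : qbinom q (c+1) (k+1) = qbinom q c k + q^(k+1) * qbinom q c (k+1) := rfl
      simp only [hg, hrec, tri_pred, ← tri_succ, pow_add, pow_succ]
      ring
    rw [Finset.sum_congr rfl hterm, Finset.sum_range_sub g (c+1)]
    have hgc : g (c+1) = 0 := by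
      simp [hg, qbinom_eq_zero q (by omega : c < c+1)]
    have hg0 : g 0 = 1 := by simp [hg, qbinom_zero_right]
    simp [hgc, hg0, qbinom_zero_right]

open Matrix in
theorem minor_of_U
    (n : ℕ) (hn : 0 < n) (q : ℂ) (hq : q ≠ 0) (i : Fin n) :
    (Matrix.of fun r c : Fin (n-1) =>
        (Matrix.of fun i' j : Fin n =>
          (-1 : ℂ) ^ (i'.val + j.val)
            * q ^ ((((j.val : ℤ) - i'.val) * ((j.val : ℤ) - i'.val + 1)) / 2)
            * qbinomZ q (j.val : ℤ) ((j.val : ℤ) - i'.val))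
          (if r.val < i.val then (⟨r.val, by omega⟩ : Fin n) else ⟨r.val + 1, by omega⟩)
          ⟨c.val + 1, by omega⟩).det
      = (-q) ^ i.val := by
  obtain ⟨m, rfl⟩ : ∃ m, n = m + 1 := ⟨n - 1, by omega⟩
  set U : Matrix (Fin (m+1)) (Fin (m+1)) ℂ :=
    Matrix.of fun i' j : Fin (m+1) =>
      (-1 : ℂ) ^ (i'.val + j.val)
        * q ^ ((((j.val : ℤ) - i'.val) * ((j.val : ℤ) - i'.val + 1)) / 2)
        * qbinomZ q (j.val : ℤ) ((j.val : ℤ) - i'.val) with hU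
  -- entries of U on/above the diagonal in terms of qbinom
  have hUentry : ∀ a b : Fin (m+1), (a:ℕ) ≤ (b:ℕ) →
      U a b = (-1:ℂ)^((a:ℕ)+(b:ℕ)) * q^(((b:ℕ)-(a:ℕ))*((b:ℕ)-(a:ℕ)+1)/2)
        * qbinom q (b:ℕ) ((b:ℕ)-(a:ℕ)) := by
    intro a b hab
    have h1 : ((b:ℕ):ℤ) - ((a:ℕ):ℤ) = (((b:ℕ)-(a:ℕ) : ℕ) : ℤ) := by omega
    have h2 := intdiv2
    simp only [hU, Matrix.of_apply, qbinomZ, h1]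
    rw [if_pos ⟨Int.natCast_nonneg _, by omega⟩, h2, zpow_natCast]
    simp
  -- U is upper triangular with diagonal 1
  have hUzero : ∀ a b : Fin (m+1), (b:ℕ) < (a:ℕ) → U a b = 0 := by
    intro a b hab
    simp only [hU, Matrix.of_apply, qbinomZ]
    rw [if_neg (by omega)]
    ring
  have hUdiag : ∀ a : Fin (m+1), U a a = 1 := by
    intro a
    rw [hUentry a a le_rfl]
    rw [show (a:ℕ)+(a:ℕ) = 2*(a:ℕ) by ring, pow_mul]
    simp [qbinom_zero_right]
  have hdet : U.det = 1 := by
    rw [Matrix.det_of_upperTriangular (fun a b hab => hUzero a b hab)]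
    simp [hUdiag]
  -- the key vector identity : v ᵥ* U = e₀
  set v := fun j : Fin (m+1) => q ^ (j:ℕ) with hv
  have hvU : v ᵥ* U = Pi.single 0 1 := by
    funext c
    set cc : ℕ := (c:ℕ) with hcc
    have hcm : cc < m + 1 := c.isLt
    set f : ℕ → ℂ := fun j => q^j * ((-1:ℂ)^(j+cc)
        * q ^ ((((cc:ℤ) - j) * ((cc:ℤ) - j + 1)) / 2)
        * qbinomZ q (cc:ℤ) ((cc:ℤ) - j)) with hf
    have step1 : (v ᵥ* U) c = ∑ j ∈ range (m+1), f j := by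
      rw [show (v ᵥ* U) c = ∑ j : Fin (m+1), v j * U j c from rfl]
      exact Fin.sum_univ_eq_sum_range f (m+1)
    have step2 : ∑ j ∈ range (cc+1), f j = ∑ j ∈ range (m+1), f j := by
      apply Finset.sum_subset
      · intro x hx
        simp only [Finset.mem_range] at hx ⊢
        omega
      · intro j hj hj'
        simp only [Finset.mem_range] at hj hj'
        have : qbinomZ q (cc:ℤ) ((cc:ℤ) - j) = 0 := by
          rw [qbinomZ, if_neg (by omega)]
        simp [hf, this]
    have step3 : ∑ k ∈ range (cc+1), f (cc + 1 - 1 - k) = ∑ j ∈ range (cc+1), f j :=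
      Finset.sum_range_reflect f (cc+1)
    have step4 : ∀ k ∈ range (cc+1),
        f (cc + 1 - 1 - k) = q^cc * ((-1:ℂ)^k * q^(k*(k-1)/2) * qbinom q cc k) := by
      intro k hk
      simp only [Finset.mem_range] at hk
      have hkc : k ≤ cc := by omega
      have hd : cc + 1 - 1 - k = cc - k := by omega
      rw [hd]
      have e1 : (cc:ℤ) - ((cc - k : ℕ) : ℤ) = (k:ℤ) := by omega
      have e2 : qbinomZ q (cc:ℤ) ((cc:ℤ) - ((cc - k : ℕ) : ℤ)) = qbinom q cc k := by
        rw [e1, qbinomZ, if_pos ⟨Int.natCast_nonneg _, by omega⟩]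
        simp
      have e3 : (q:ℂ) ^ ((((cc:ℤ) - ((cc - k : ℕ):ℤ)) * ((cc:ℤ) - ((cc - k : ℕ):ℤ) + 1)) / 2)
          = q ^ (k*(k+1)/2 : ℕ) := by
        rw [e1, intdiv2, zpow_natCast]
      have e4 : (-1:ℂ)^((cc - k) + cc) = (-1:ℂ)^k := by
        rw [show (cc - k) + cc = k + 2*(cc - k) by omega, pow_add, pow_mul]
        simp
      simp only [hf, e2, e3, e4]
      obtain ⟨a, ha⟩ : ∃ a, k*(k-1)/2 = a := ⟨_, rfl⟩
      have e5 : k*(k+1)/2 = a + k := by rw [tri2, ha]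
      rw [e5, ha, show q^(cc - k) * ((-1:ℂ)^k * q^(a+k) * qbinom q cc k)
          = (-1:ℂ)^k * (q^(cc-k) * q^(a+k)) * qbinom q cc k by ring, ← pow_add,
        show cc - k + (a + k) = cc + a by omega, pow_add]
      ring
    have final : (v ᵥ* U) c = q^cc * (if cc = 0 then 1 else 0) := by
      rw [step1, ← step2, ← step3, Finset.sum_congr rfl step4, ← Finset.mul_sum,
        gauss_sum]
    rw [final]
    rcases eq_or_ne cc 0 with h0 | h0
    · have : c = 0 := by
        apply Fin.ext
        rw [Fin.val_zero]; exact h0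
      subst this
      simp [h0, Pi.single_eq_same]
    · have : c ≠ 0 := by
        intro h
        apply h0
        rw [hcc, h]
        rfl
      simp [Pi.single_apply, this, h0]
  -- the adjugate entries of row 0
  have hadj : ∀ j : Fin (m+1), U.adjugate 0 j = q^(j:ℕ) := by
    have h1 : (v ᵥ* U) ᵥ* U.adjugate = v := by
      rw [Matrix.vecMul_vecMul, Matrix.mul_adjugate, hdet, one_smul, Matrix.vecMul_one]
    rw [hvU] at h1
    intro j
    have h2 := congrFun h1 j
    have h3 : (Pi.single (0 : Fin (m+1)) (1:ℂ) ᵥ* U.adjugate) j = U.adjugate 0 j := by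
      simp [Matrix.vecMul, dotProduct, Pi.single_apply]
    rw [h3] at h2
    exact h2
  -- the cofactor expansion
  have hAdet : (U.updateRow i (Pi.single 0 1)).det = q^(i:ℕ) := by
    rw [← Matrix.adjugate_apply, hadj]
  have hexp := Matrix.det_succ_row (U.updateRow i (Pi.single 0 1)) i
  have honly : ∀ j : Fin (m+1), j ∈ Finset.univ → j ≠ 0 →
      (-1:ℂ) ^ ((i:ℕ) + (j:ℕ)) * (U.updateRow i (Pi.single 0 1)) i j
        * ((U.updateRow i (Pi.single 0 1)).submatrix i.succAbove j.succAbove).det = 0 := by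
    intro j _ hj
    rw [Matrix.updateRow_self, Pi.single_apply, if_neg hj]
    ring
  rw [Finset.sum_eq_single_of_mem (0 : Fin (m+1)) (Finset.mem_univ _) honly,
    Matrix.updateRow_self, Pi.single_eq_same, hAdet] at hexp
  have hsub : (U.updateRow i (Pi.single 0 1)).submatrix i.succAbove (Fin.succAbove 0)
      = U.submatrix i.succAbove (Fin.succAbove 0) := by
    ext r c
    simp [Matrix.updateRow_ne (Fin.succAbove_ne i r)]
  rw [hsub] at hexp
  -- identify the goal matrix with the submatrix
  have hidx : ∀ r : Fin m,
      (if (r:ℕ) < (i:ℕ) then (⟨(r:ℕ), by omega⟩ : Fin (m+1)) else ⟨(r:ℕ) + 1, by omega⟩)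
        = i.succAbove r := by
    intro r
    rcases lt_or_ge (r:ℕ) (i:ℕ) with h | h
    · rw [if_pos h, Fin.succAbove, if_pos (by simpa [Fin.lt_def] using h)]
      rfl
    · rw [if_neg (by omega), Fin.succAbove,
        if_neg (by simp only [not_lt, Fin.le_def]; exact h)]
      rfl
  have hM : (Matrix.of fun r c : Fin (m+1-1) =>
        U (if (r:ℕ) < (i:ℕ) then (⟨(r:ℕ), by omega⟩ : Fin (m+1)) else ⟨(r:ℕ) + 1, by omega⟩)
          (⟨(c:ℕ) + 1, by omega⟩ : Fin (m+1)))
      = U.submatrix i.succAbove (Fin.succAbove 0) := by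
    ext r c
    rw [Matrix.submatrix_apply, Fin.zero_succAbove, Matrix.of_apply, hidx r]
    congr 1
  rw [show (Matrix.of fun r c : Fin (m+1-1) =>
        (Matrix.of fun i' j : Fin (m+1) =>
          (-1 : ℂ) ^ (i'.val + j.val)
            * q ^ ((((j.val : ℤ) - i'.val) * ((j.val : ℤ) - i'.val + 1)) / 2)
            * qbinomZ q (j.val : ℤ) ((j.val : ℤ) - i'.val))
          (if r.val < i.val then (⟨r.val, by omega⟩ : Fin (m+1)) else ⟨r.val + 1, by omega⟩)
          ⟨c.val + 1, by omega⟩)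
      = U.submatrix i.succAbove (Fin.succAbove 0) from hM]
  -- conclude
  have hsq : ((-1:ℂ)^(i:ℕ)) * ((-1:ℂ)^(i:ℕ)) = 1 := by
    rw [← pow_add, show (i:ℕ)+(i:ℕ) = 2*(i:ℕ) by ring, pow_mul]
    simp
  have h00 : ((0 : Fin (m+1)) : ℕ) = 0 := rfl
  rw [h00] at hexp
  calc (U.submatrix i.succAbove (Fin.succAbove 0)).det
      = ((-1:ℂ)^(i:ℕ) * (-1:ℂ)^(i:ℕ)) * (U.submatrix i.succAbove (Fin.succAbove 0)).det := by
        rw [hsq, one_mul]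
    _ = (-1:ℂ)^(i:ℕ) * ((-1:ℂ)^((i:ℕ)+0) * 1 * (U.submatrix i.succAbove (Fin.succAbove 0)).det) := by
        ring
    _ = (-1:ℂ)^(i:ℕ) * q^(i:ℕ) := by rw [← hexp]
    _ = (-q)^(i:ℕ) := by rw [neg_pow q]
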